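/- arXiv:math/0011143 — 5 statements merged into one kernel-verified Lean document; each statement's English description precedes it below -/
import Mathlib

section
/- Orthogonal approximate partial isometries are close to orthogonal exact partial isometries: given δ > 0 there exists ε > 0 such that for every n and all ε-approximate partial isometries v, w ∈ M_n(ℂ) with v*w = 0 and v w* = 0, there exist partial isometries v̂, ŵ ∈ M_n(ℂ) with v̂*ŵ = 0, v̂ ŵ* = 0, ‖v − v̂‖ ≤ δ and ‖w − ŵ‖ ≤ δ. -/
open scoped Matrix.Norms.L2Operator
open Matrix

/-!
Put `a = v⋆v`. Since `‖a - a²‖ ≤ ε ≤ 1/8`, the spectrum of `a` lies within `2ε` of `{0, 1}`. Take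
the continuous function `g(t) = t q(t)` (with `q = cutoff`), which vanishes on `(-∞, 1/2]` and
equals `t ^ (-1/2)` on `[3/4, ∞)`. Then `v g(a)` (`roundPartialIsometry v`) is a partial
isometry, as `(v g(a))⋆ (v g(a)) = g(a) a g(a)` is the spectral projection of `a` for the part of
the spectrum near `1`, and `‖v - v g(a)‖² = ‖(1 - g)(a) a (1 - g)(a)‖ ≤ 2ε`.
Orthogonality survives the correction: `(v g(a))⋆ (w g(b)) = g(a) (v⋆w) g(b)` and
`v g(a) (w g(b))⋆ = v q(a) v⋆ (v w⋆) w q(b) w⋆`.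
-/

noncomputable def cutoff (t : ℝ) : ℝ := min 1 (max 0 (4 * t - 2)) / √(max t (1 / 2)) ^ 3

@[fun_prop]
lemma continuous_cutoff : Continuous cutoff := by
  refine Continuous.div (by fun_prop) (by fun_prop) fun t => pow_ne_zero _ ?_
  exact (Real.sqrt_pos.2 (lt_of_lt_of_le (by norm_num) (le_max_right _ _))).ne'

lemma mul_cutoff_of_le_half {t : ℝ} (ht : t ≤ 1 / 2) : t * cutoff t = 0 := by
  rw [cutoff, max_eq_left (by linarith), min_eq_right zero_le_one, zero_div, mul_zero]

lemma mul_cutoff_of_three_quarters_le {t : ℝ} (ht : 3 / 4 ≤ t) : t * cutoff t = (√t)⁻¹ := by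
  have hs : 0 < √t := Real.sqrt_pos.2 (by linarith)
  rw [cutoff, max_eq_left (by linarith : 1 / 2 ≤ t), max_eq_right (by linarith : 0 ≤ 4 * t - 2),
    min_eq_left (by linarith : 1 ≤ 4 * t - 2)]
  field_simp
  rw [Real.sq_sqrt (by linarith)]

lemma abs_le_or_abs_sub_one_le_of_abs_sub_mul_self_le {ε t : ℝ} (hε : ε ≤ 1 / 8)
    (h : |t - t * t| ≤ ε) : |t| ≤ 2 * ε ∨ |t - 1| ≤ 2 * ε := by
  rw [abs_le] at h
  by_contra! hc
  obtain ⟨h1, h2⟩ := hc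
  rw [lt_abs] at h1 h2
  rcases h1 with h1 | h1 <;> rcases h2 with h2 | h2
  · nlinarith
  · nlinarith [mul_pos (show 0 < t - 2 * ε by linarith) (show 0 < 1 - t - 2 * ε by linarith)]
  · linarith
  · nlinarith [mul_self_nonneg t]

lemma sq_sqrt_sub_one_le_abs_sub_one {t : ℝ} (ht : 0 ≤ t) : (√t - 1) ^ 2 ≤ |t - 1| := by
  have hs := Real.sqrt_nonneg t
  calc (√t - 1) ^ 2 = |√t - 1| * |√t - 1| := by rw [abs_mul_abs_self, sq]
    _ ≤ |√t - 1| * (√t + 1) :=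
        mul_le_mul_of_nonneg_left (abs_le.2 ⟨by linarith, by linarith⟩) (abs_nonneg _)
    _ = |t - 1| := by
        rw [← abs_of_nonneg (by positivity : 0 ≤ √t + 1), ← abs_mul]
        congr 1
        linear_combination Real.sq_sqrt ht

section CStarAlgebra

variable {A : Type*} [CStarAlgebra A]

lemma abs_le_or_abs_sub_one_le_of_mem_spectrum {a : A} (ha : IsSelfAdjoint a) {ε : ℝ}
    (hε : ε ≤ 1 / 8) (h : ‖a - a * a‖ ≤ ε) {t : ℝ} (ht : t ∈ spectrum ℝ a) :
    |t| ≤ 2 * ε ∨ |t - 1| ≤ 2 * ε := by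
  refine abs_le_or_abs_sub_one_le_of_abs_sub_mul_self_le hε ?_
  have hle := norm_apply_le_norm_cfc (fun t : ℝ => t - t * t) a ht
  rw [cfc_sub (fun t : ℝ => t) (fun t : ℝ => t * t) a, cfc_mul (fun t : ℝ => t) (fun t : ℝ => t) a,
    cfc_id' ℝ a] at hle
  exact hle.trans h

lemma star_mul_cfc_mul_self (v : A) {f : ℝ → ℝ} (hf : Continuous f) :
    star (v * cfc f (star v * v)) * (v * cfc f (star v * v)) =
      cfc (fun t => f t * t * f t) (star v * v) := by
  rw [cfc_mul (fun t => f t * t) f, cfc_mul f (fun t : ℝ => t), cfc_id' ℝ (star v * v), star_mul,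
    IsSelfAdjoint.cfc.star_eq]
  simp only [mul_assoc]

noncomputable def roundPartialIsometry (v : A) : A :=
  v * cfc (fun t : ℝ => t * cutoff t) (star v * v)

theorem isIdempotentElem_star_roundPartialIsometry_mul_self {v : A} {ε : ℝ} (hε : ε ≤ 1 / 8)
    (hv : ‖star v * v - star v * v * (star v * v)‖ ≤ ε) :
    IsIdempotentElem (star (roundPartialIsometry v) * roundPartialIsometry v) := by
  rw [IsIdempotentElem, roundPartialIsometry, star_mul_cfc_mul_self v (by fun_prop),
    ← cfc_mul (fun t => t * cutoff t * t * (t * cutoff t))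
      (fun t => t * cutoff t * t * (t * cutoff t))]
  refine cfc_congr fun t ht => ?_
  rcases abs_le_or_abs_sub_one_le_of_mem_spectrum (.star_mul_self v) hε hv ht with h | h <;>
    rw [abs_le] at h
  · simp [mul_cutoff_of_le_half (by linarith : t ≤ 1 / 2)]
  · have hs : 0 < √t := Real.sqrt_pos.2 (by linarith)
    have hone : (√t)⁻¹ * t * (√t)⁻¹ = 1 := by
      field_simp
      rw [Real.sq_sqrt (by linarith)]
    simp [mul_cutoff_of_three_quarters_le (by linarith : 3 / 4 ≤ t), hone]

theorem norm_sub_roundPartialIsometry_sq_le {v : A} {ε : ℝ} (hε : ε ≤ 1 / 8)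
    (hv : ‖star v * v - star v * v * (star v * v)‖ ≤ ε) :
    ‖v - roundPartialIsometry v‖ ^ 2 ≤ 2 * ε := by
  have hsub : v - roundPartialIsometry v =
      v * cfc (fun t : ℝ => 1 - t * cutoff t) (star v * v) := by
    rw [roundPartialIsometry, cfc_sub (fun _ : ℝ => (1 : ℝ)) (fun t => t * cutoff t),
      cfc_const_one ℝ (star v * v), mul_sub, mul_one]
  rw [hsub, sq, ← CStarRing.norm_star_mul_self, star_mul_cfc_mul_self v (by fun_prop)]
  refine norm_cfc_le (by linarith [(norm_nonneg _).trans hv]) fun t ht => ?_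
  rcases abs_le_or_abs_sub_one_le_of_mem_spectrum (.star_mul_self v) hε hv ht with h | h
  · have ht : t ≤ 1 / 2 := by linarith [le_abs_self t]
    simpa [mul_cutoff_of_le_half ht] using h
  · have ht : 3 / 4 ≤ t := by linarith [neg_abs_le (t - 1)]
    have hs : 0 < √t := Real.sqrt_pos.2 (by linarith)
    have hsq : (1 - (√t)⁻¹) * t * (1 - (√t)⁻¹) = (√t - 1) ^ 2 := by
      field_simp
      rw [Real.sq_sqrt (by linarith)]
      ring
    rw [mul_cutoff_of_three_quarters_le ht, hsq, Real.norm_of_nonneg (sq_nonneg _)]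
    exact (sq_sqrt_sub_one_le_abs_sub_one (by linarith)).trans h

theorem star_roundPartialIsometry_mul_eq_zero {v w : A} (h : star v * w = 0) :
    star (roundPartialIsometry v) * roundPartialIsometry w = 0 := by
  rw [roundPartialIsometry, roundPartialIsometry, star_mul, IsSelfAdjoint.cfc.star_eq, mul_assoc,
    ← mul_assoc (star v), h, zero_mul, mul_zero]

theorem roundPartialIsometry_mul_star_eq_zero {v w : A} (h : v * star w = 0) :
    roundPartialIsometry v * star (roundPartialIsometry w) = 0 := by
  have hv : cfc (fun t : ℝ => t * cutoff t) (star v * v) =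
      cfc cutoff (star v * v) * (star v * v) := by
    simp_rw [mul_comm _ (cutoff _)]
    rw [cfc_mul cutoff (fun t : ℝ => t), cfc_id' ℝ (star v * v)]
  have hw : cfc (fun t : ℝ => t * cutoff t) (star w * w) =
      star w * w * cfc cutoff (star w * w) := by
    rw [cfc_mul (fun t : ℝ => t) cutoff, cfc_id' ℝ (star w * w)]
  rw [roundPartialIsometry, roundPartialIsometry, star_mul, IsSelfAdjoint.cfc.star_eq, hv, hw]
  simp only [mul_assoc]
  rw [← mul_assoc v (star w), h, zero_mul, mul_zero, mul_zero, mul_zero]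

end CStarAlgebra

/-- Orthogonal approximate partial isometries are close to
orthogonal exact partial isometries: given `δ > 0` there exists `ε > 0` such
that for all `ε`-approximate partial isometries `v, w ∈ Mₙ(ℂ)` with `v*w = 0`
and `v w* = 0`, there exist partial isometries `v̂, ŵ` with `v̂*ŵ = 0`,
`v̂ ŵ* = 0`, `‖v − v̂‖ ≤ δ` and `‖w − ŵ‖ ≤ δ`. -/
theorem stmt_3 (δ : ℝ) (hδ : 0 < δ) :
    ∃ ε : ℝ, 0 < ε ∧
      ∀ (n : ℕ) (v w : Matrix (Fin n) (Fin n) ℂ),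
        ‖vᴴ * v - (vᴴ * v) * (vᴴ * v)‖ ≤ ε →
        ‖wᴴ * w - (wᴴ * w) * (wᴴ * w)‖ ≤ ε →
        vᴴ * w = 0 → v * wᴴ = 0 →
        ∃ v' w' : Matrix (Fin n) (Fin n) ℂ,
          (v'ᴴ * v') * (v'ᴴ * v') = v'ᴴ * v' ∧
          (w'ᴴ * w') * (w'ᴴ * w') = w'ᴴ * w' ∧
          v'ᴴ * w' = 0 ∧ v' * w'ᴴ = 0 ∧
          ‖v - v'‖ ≤ δ ∧ ‖w - w'‖ ≤ δ := by
  refine ⟨min (1 / 8) (δ ^ 2 / 2), by positivity, fun n v w hv hw hvw hvw' => ?_⟩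
  simp only [← star_eq_conjTranspose] at *
  have hε : min (1 / 8) (δ ^ 2 / 2) ≤ 1 / 8 := min_le_left _ _
  have close {u : Matrix (Fin n) (Fin n) ℂ}
      (hu : ‖star u * u - star u * u * (star u * u)‖ ≤ min (1 / 8) (δ ^ 2 / 2)) :
      ‖u - roundPartialIsometry u‖ ≤ δ := by
    refine le_of_pow_le_pow_left₀ two_ne_zero hδ.le ?_
    linarith [norm_sub_roundPartialIsometry_sq_le hε hu, min_le_right (1 / 8 : ℝ) (δ ^ 2 / 2)]
  exact ⟨roundPartialIsometry v, roundPartialIsometry w,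
    isIdempotentElem_star_roundPartialIsometry_mul_self hε hv,
    isIdempotentElem_star_roundPartialIsometry_mul_self hε hw,
    star_roundPartialIsometry_mul_eq_zero hvw, roundPartialIsometry_mul_star_eq_zero hvw',
    close hv, close hw⟩
end

section
/- For every η > 0 there exists ε > 0 such that: for every r ≥ 1, every block structure N = n₁ + ⋯ + n_r and every w ∈ M_N(ℂ), if there exist a partial isometry v ∈ M_N(ℂ) with ‖w − v‖ ≤ ε and a block diagonal projection P ∈ M_N(ℂ) with ‖w w* − P‖ ≤ ε, then there exists a partial isometry w̄ ∈ M_N(ℂ) such that w̄ w̄* is a block diagonal projection and ‖w − w̄‖ ≤ η. -/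
/-! With `h = 1 + p (w w* - p) p`, which is within `ε` of `1` and is the identity on the range of
`1 - p`, the element `w' = h^{-1/2} p w` satisfies `w' w'* = h^{-1/2} (h - (1 - p)) h^{-1/2} = p`.
It is close to `w` because `‖(1 - p) w‖² = ‖(1 - p)(w w* - p)(1 - p)‖ ≤ ε` and
`‖1 - h^{-1/2}‖ ≤ 2ε`. Since `w' w'*` is a projection, so is `w'* w'`, and `w' w'* = P` is block
diagonal. -/

open scoped Matrix.Norms.L2Operator
open Matrix

lemma abs_one_sub_inv_sqrt_le {t : ℝ} (ht : 1 / 4 ≤ t) : |1 - (√t)⁻¹| ≤ 2 * |t - 1| := by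
  have hr : 1 / 2 ≤ √t := by
    rw [Real.le_sqrt' (by norm_num)]
    linarith
  have hr0 : 0 < √t := by linarith
  have hsq : |√t - 1| * (√t + 1) = |t - 1| := by
    rw [← abs_of_pos (by linarith : 0 < √t + 1), ← abs_mul]
    congr 1
    nlinarith [Real.sq_sqrt (by linarith : (0 : ℝ) ≤ t)]
  have hinv : (√t)⁻¹ ≤ 2 := by rw [inv_le_comm₀ hr0 two_pos]; linarith
  calc |1 - (√t)⁻¹| = |√t - 1| * (√t)⁻¹ := by
        rw [show 1 - (√t)⁻¹ = (√t - 1) * (√t)⁻¹ by field_simp, abs_mul, abs_inv, abs_of_pos hr0]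
    _ ≤ |t - 1| * 2 :=
        mul_le_mul (by nlinarith [abs_nonneg (√t - 1)]) hinv (by positivity) (abs_nonneg _)
    _ = 2 * |t - 1| := mul_comm _ _

lemma mul_mul_star_mul_eq_of_mul_mul_eq_one {R : Type*} [Ring R] [StarRing R] {p h s x : R}
    (hs : IsSelfAdjoint s) (hshs : s * h * s = 1) (hsh : Commute s h) (hsp : Commute s p)
    (hph : (1 - p) * h = 1 - p) (hx : x * star x = h - (1 - p)) :
    s * x * star (s * x) = p := by
  have hsq : Commute s (1 - p) := (Commute.one_right s).sub_right hsp
  calc s * x * star (s * x) = s * (h - (1 - p)) * s := by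
        rw [← hx, star_mul, hs.star_eq]; simp only [mul_assoc]
    _ = s * h * s - s * (1 - p) * s := by noncomm_ring
    _ = s * h * s - (1 - p) * (s * h * s) := by
        rw [hsq.eq, ← hph, mul_assoc (1 - p) h, ← hsh.eq, hph]; simp only [mul_assoc]
    _ = p := by rw [hshs, mul_one, sub_sub_cancel]

variable {A : Type*} [CStarAlgebra A]

lemma isIdempotentElem_star_mul_self_of_mul_star_self {a : A}
    (ha : IsIdempotentElem (a * star a)) : IsIdempotentElem (star a * a) := by
  have hfix : a * star a * a = a := by
    have h0 : (a - a * star a * a) * star (a - a * star a * a) = 0 := by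
      have e : (a - a * star a * a) * star (a - a * star a * a) =
          a * star a - (a * star a) * (a * star a) - (a * star a) * (a * star a)
            + (a * star a) * (a * star a) * (a * star a) := by
        simp only [star_sub, star_mul, star_star]; noncomm_ring
      rw [e, ha.eq, ha.eq]; abel
    exact (sub_eq_zero.mp ((CStarRing.mul_star_self_eq_zero_iff _).mp h0)).symm
  show star a * a * (star a * a) = star a * a
  rw [show star a * a * (star a * a) = star a * (a * star a * a) by noncomm_ring, hfix]

lemma IsStarProjection.norm_mul_mul_le {p : A} (hp : IsStarProjection p) (a : A) :
    ‖p * a * p‖ ≤ ‖a‖ :=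
  calc ‖p * a * p‖ ≤ ‖p‖ * ‖a‖ * ‖p‖ := norm_mul₃_le
    _ ≤ 1 * ‖a‖ * 1 := by gcongr <;> exact hp.norm_le
    _ = ‖a‖ := by ring

lemma IsStarProjection.norm_mul_sq_le_norm_mul_star_sub {p q w : A}
    (hq : IsStarProjection q) (hqp : q * p = 0) : ‖q * w‖ ^ 2 ≤ ‖w * star w - p‖ := by
  have hqpq : q * p * q = 0 := by rw [hqp, zero_mul]
  calc ‖q * w‖ ^ 2 = ‖q * (w * star w - p) * q‖ := by
        rw [sq, ← CStarRing.norm_self_mul_star, star_mul, hq.isSelfAdjoint.star_eq, mul_sub,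
          sub_mul, hqpq, sub_zero]
        simp only [mul_assoc]
    _ ≤ ‖w * star w - p‖ := hq.norm_mul_mul_le _

lemma norm_sq_le_one_add_norm_mul_star_sub {p : A} (hp : IsStarProjection p) (w : A) :
    ‖w‖ ^ 2 ≤ 1 + ‖w * star w - p‖ :=
  calc ‖w‖ ^ 2 = ‖p + (w * star w - p)‖ := by
        rw [add_sub_cancel, CStarRing.norm_self_mul_star, sq]
    _ ≤ 1 + ‖w * star w - p‖ := (norm_add_le _ _).trans (by gcongr; exact hp.norm_le)

lemma abs_sub_one_le_of_mem_spectrum {a : A} {ε : ℝ} (h : ‖a - 1‖ ≤ ε) {t : ℝ}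
    (ht : t ∈ spectrum ℝ a) : |t - 1| ≤ ε := by
  rcases subsingleton_or_nontrivial A with _ | _
  · simp [spectrum.of_subsingleton] at ht
  have ht' : t - 1 ∈ spectrum ℝ (a - 1) := by
    rw [← map_one (algebraMap ℝ A), ← spectrum.sub_singleton_eq]
    exact ⟨t, ht, 1, rfl, rfl⟩
  simpa using (spectrum.norm_le_norm_of_mem ht').trans h

section InvSqrt

variable {h : A} (hh : IsSelfAdjoint h)
include hh

lemma cfc_inv_sqrt_mul_mul_cfc_inv_sqrt (hpos : ∀ t ∈ spectrum ℝ h, 0 < t) :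
    cfc (fun t => (√t)⁻¹) h * h * cfc (fun t => (√t)⁻¹) h = 1 := by
  have hcont : ContinuousOn (fun t : ℝ => (√t)⁻¹) (spectrum ℝ h) :=
    Real.continuous_sqrt.continuousOn.inv₀ fun t ht => (Real.sqrt_pos.2 (hpos t ht)).ne'
  conv_lhs => enter [1, 2]; rw [← cfc_id' ℝ h]
  rw [← cfc_mul _ _ _ hcont, ← cfc_mul (fun t => (√t)⁻¹ * t) _ _ (hcont.mul continuousOn_id) hcont,
    ← cfc_one ℝ h]
  refine cfc_congr fun t ht => ?_
  rw [Pi.one_apply, mul_comm, ← mul_assoc, ← mul_inv, Real.mul_self_sqrt (hpos t ht).le,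
    inv_mul_cancel₀ (hpos t ht).ne']

lemma norm_one_sub_cfc_inv_sqrt_le {ε : ℝ} (hε : ε ≤ 3 / 4) (hh1 : ‖h - 1‖ ≤ ε) :
    ‖1 - cfc (fun t => (√t)⁻¹) h‖ ≤ 2 * ε := by
  have hspec (t) (ht : t ∈ spectrum ℝ h) : |t - 1| ≤ ε := abs_sub_one_le_of_mem_spectrum hh1 ht
  have hcont : ContinuousOn (fun t : ℝ => (√t)⁻¹) (spectrum ℝ h) :=
    Real.continuous_sqrt.continuousOn.inv₀ fun t ht =>
      (Real.sqrt_pos.2 (by linarith [abs_le.1 (hspec t ht)])).ne'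
  rw [← cfc_one ℝ h, ← cfc_sub 1 _ _ continuousOn_const hcont]
  refine norm_cfc_le (by linarith [(norm_nonneg _).trans hh1]) fun t ht => ?_
  calc ‖1 - (√t)⁻¹‖ ≤ 2 * |t - 1| :=
        abs_one_sub_inv_sqrt_le (by linarith [abs_le.1 (hspec t ht)])
    _ ≤ 2 * ε := by linarith [hspec t ht]

end InvSqrt

lemma norm_sub_mul_mul_le_of_norm_one_sub_le {p s w : A} (hp : IsStarProjection p) {ε : ℝ}
    (hε : ε ≤ 1 / 4) (hwp : ‖w * star w - p‖ ≤ ε) (hs : ‖1 - s‖ ≤ 2 * ε) :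
    ‖w - s * (p * w)‖ ≤ 5 * √ε := by
  have hε0 : 0 ≤ ε := (norm_nonneg _).trans hwp
  have hw : ‖w‖ ≤ 2 := by nlinarith [norm_sq_le_one_add_norm_mul_star_sub hp w, norm_nonneg w]
  have hqw : ‖(1 - p) * w‖ ≤ √ε :=
    (Real.le_sqrt (norm_nonneg _) hε0).2
      ((hp.one_sub.norm_mul_sq_le_norm_mul_star_sub hp.one_sub_mul_self).trans hwp)
  have hsw : ‖(1 - s) * (p * w)‖ ≤ 2 * ε * 2 :=
    calc ‖(1 - s) * (p * w)‖ ≤ ‖1 - s‖ * (‖p‖ * ‖w‖) :=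
          (norm_mul_le _ _).trans (by gcongr; exact norm_mul_le _ _)
      _ ≤ 2 * ε * (1 * 2) := by gcongr; exact hp.norm_le
      _ = 2 * ε * 2 := by ring
  have hεs : ε ≤ √ε := Real.le_sqrt_self_iff.2 (by linarith)
  calc ‖w - s * (p * w)‖ = ‖(1 - p) * w + (1 - s) * (p * w)‖ := by congr 1; noncomm_ring
    _ ≤ √ε + 2 * ε * 2 := (norm_add_le _ _).trans (add_le_add hqw hsw)
    _ ≤ 5 * √ε := by linarith

theorem exists_mul_star_eq_of_norm_mul_star_sub_le {p w : A} (hp : IsStarProjection p)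
    {ε : ℝ} (hε : ε ≤ 1 / 4) (hwp : ‖w * star w - p‖ ≤ ε) :
    ∃ w' : A, w' * star w' = p ∧ ‖w - w'‖ ≤ 5 * √ε := by
  have hpp : p * p = p := hp.isIdempotentElem.eq
  set h := 1 + p * (w * star w - p) * p with hh
  have hsa : IsSelfAdjoint h := by
    simp [hh, IsSelfAdjoint, star_sub, hp.isSelfAdjoint.star_eq, mul_assoc]
  have hh1 : ‖h - 1‖ ≤ ε := by
    rw [hh, add_sub_cancel_left]; exact (hp.norm_mul_mul_le _).trans hwp
  have hpos (t) (ht : t ∈ spectrum ℝ h) : 0 < t := by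
    linarith [abs_le.1 (abs_sub_one_le_of_mem_spectrum hh1 ht)]
  have hph : (1 - p) * h = 1 - p := by
    rw [hh, mul_add, mul_one, ← mul_assoc, ← mul_assoc, hp.one_sub_mul_self, zero_mul, zero_mul,
      add_zero]
  have hhp : Commute h p := by
    refine sub_eq_zero.1 ?_
    rw [show h * p - p * h = p * (w * star w - p) * (p * p - p) - (p * p - p) * (w * star w - p) * p
      by rw [hh]; noncomm_ring]
    simp only [hpp, sub_self, mul_zero, zero_mul]
  have hpw : p * w * star (p * w) = h - (1 - p) := by
    rw [star_mul, hp.isSelfAdjoint.star_eq,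
      show h - (1 - p) = p * w * (star w * p) - (p * p * p - p) by rw [hh]; noncomm_ring,
      hpp, hpp, sub_self, sub_zero]
  set s := cfc (fun t => (√t)⁻¹) h
  have hshs : s * h * s = 1 := cfc_inv_sqrt_mul_mul_cfc_inv_sqrt hsa hpos
  refine ⟨s * (p * w), mul_mul_star_mul_eq_of_mul_mul_eq_one IsSelfAdjoint.cfc hshs
    (Commute.cfc_real (Commute.refl h) _) (hhp.cfc_real _) hph hpw,
    norm_sub_mul_mul_le_of_norm_one_sub_le hp hε hwp
      (norm_one_sub_cfc_inv_sqrt_le hsa (by linarith) hh1)⟩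

/-- For every `η > 0` there exists `ε > 0` such that: for every
`r ≥ 1`, every block structure `N = n₁ + ⋯ + n_r` (blocks indexed by the sigma
type `(k : Fin r) × Fin (n k)`) and every `w ∈ M_N(ℂ)`, if there exist a partial
isometry `v` with `‖w − v‖ ≤ ε` and a block diagonal projection `P` with
`‖w w* − P‖ ≤ ε`, then there is a partial isometry `w̄` such that `w̄ w̄*` is a
block diagonal projection and `‖w − w̄‖ ≤ η`. -/
theorem stmt_5 (η : ℝ) (hη : 0 < η) :
    ∃ ε : ℝ, 0 < ε ∧
      ∀ (r : ℕ), 1 ≤ r →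
      ∀ (n : Fin r → ℕ)
        (w : Matrix ((k : Fin r) × Fin (n k)) ((k : Fin r) × Fin (n k)) ℂ),
        (∃ v : Matrix ((k : Fin r) × Fin (n k)) ((k : Fin r) × Fin (n k)) ℂ,
          (vᴴ * v) * (vᴴ * v) = vᴴ * v ∧ ‖w - v‖ ≤ ε) →
        (∃ P : Matrix ((k : Fin r) × Fin (n k)) ((k : Fin r) × Fin (n k)) ℂ,
          P * P = P ∧ Pᴴ = P ∧
          (∀ i j : (k : Fin r) × Fin (n k), i.1 ≠ j.1 → P i j = 0) ∧
          ‖w * wᴴ - P‖ ≤ ε) →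
        ∃ w' : Matrix ((k : Fin r) × Fin (n k)) ((k : Fin r) × Fin (n k)) ℂ,
          (w'ᴴ * w') * (w'ᴴ * w') = w'ᴴ * w' ∧
          (∀ i j : (k : Fin r) × Fin (n k), i.1 ≠ j.1 → (w' * w'ᴴ) i j = 0) ∧
          ‖w - w'‖ ≤ η := by
  refine ⟨min ((η / 5) ^ 2) (1 / 4), by positivity, ?_⟩
  rintro r - n w - ⟨P, hP2, hPs, hPblock, hwP⟩
  obtain ⟨w', hw'P, hw'⟩ :=
    exists_mul_star_eq_of_norm_mul_star_sub_le ⟨hP2, hPs⟩ (min_le_right _ _) hwP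
  refine ⟨w', isIdempotentElem_star_mul_self_of_mul_star_self (by rw [hw'P]; exact hP2),
    fun i j hij => ?_, ?_⟩
  · rw [← star_eq_conjTranspose, hw'P]
    exact hPblock i j hij
  · calc ‖w - w'‖ ≤ 5 * √((η / 5) ^ 2) := hw'.trans (by gcongr; exact min_le_left _ _)
      _ = η := by rw [Real.sqrt_sq (by positivity)]; ring
end

section
/- For every r ≥ 1 and η > 0 there exists ε > 0, depending only on r and η, such that: for every n and all chains of orthogonal projections 0 = P₀ < P₁ < ⋯ < P_r = I and 0 = Q₀ < Q₁ < ⋯ < Q_r = I in M_n(ℂ), with associated nest algebras A₁ = {a ∈ M_n(ℂ) : (I − P_i) a P_i = 0 for i = 1,…,r} and A₂ = {a ∈ M_n(ℂ) : (I − Q_i) a Q_i = 0 for i = 1,…,r}, if A₁ ⊆_ε A₂ then A₁ ∩ A₁* ⊆_η A₂ ∩ A₂*. -/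
open scoped Matrix.Norms.L2Operator
open Matrix

/-- The nest algebra in `Mₙ(ℂ)` associated to a chain of orthogonal projections
`P 0, P 1, …, P r`: all matrices `a` with `(1 - P i) * a * P i = 0` for each `i`. -/
def nestAlgebra {n r : ℕ} (P : Fin (r + 1) → Matrix (Fin n) (Fin n) ℂ) :
    Set (Matrix (Fin n) (Fin n) ℂ) :=
  {a | ∀ i : Fin (r + 1), (1 - P i) * a * P i = 0}

/-- A chain of orthogonal projections `0 = P₀ < P₁ < ⋯ < P_r = I` in `Mₙ(ℂ)`. -/
def IsProjChain {n r : ℕ} (P : Fin (r + 1) → Matrix (Fin n) (Fin n) ℂ) : Prop :=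
  (∀ i, P i * P i = P i ∧ (P i)ᴴ = P i) ∧
    P 0 = 0 ∧ P (Fin.last r) = 1 ∧
    (∀ i j : Fin (r + 1), i ≤ j → P i * P j = P i) ∧
    (∀ i j : Fin (r + 1), i < j → P i ≠ P j)

/-!
Let `Δₖ = Q (k+1) - Q k` be the gaps of the second nest and `b = ∑ₖ Δₖ a Δₖ` the block-diagonal
compression of `a`; both `b` and `b*` lie in `A₂`. Since `1 - Δₖ = (1 - Q (k+1)) + Q k`,
`a - b = ∑ₖ ((1 - Q (k+1)) a Q (k+1) + Q k a (1 - Q k)) Δₖ`. A compression `(1 - Q i) x Q i` of an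
`x` in the unit ball of `A₁` has norm less than `ε`, because `x` is `ε`-close to some `c ∈ A₂` and
`(1 - Q i) c Q i = 0`. Applied to `x = a` and, via `Q a (1 - Q) = ((1 - Q) a* Q)*`, to `x = a*`,
this gives `‖a - b‖ ≤ 2 r ε`, so `ε = η / (2 r + 1)` works.
-/

theorem Fin.sum_univ_succ_sub_castSucc {M : Type*} [AddCommGroup M] :
    ∀ {r : ℕ} (f : Fin (r + 1) → M), ∑ k : Fin r, (f k.succ - f k.castSucc) = f (Fin.last r) - f 0
  | 0, f => by simp
  | r + 1, f => by
    rw [Fin.sum_univ_castSucc]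
    simp only [Fin.succ_castSucc, Fin.sum_univ_succ_sub_castSucc fun i => f i.castSucc]
    simp

section Nest

variable {A : Type*} {r : ℕ}

structure IsProjNest [Ring A] [StarRing A] (Q : Fin (r + 1) → A) : Prop where
  isStarProjection : ∀ i, IsStarProjection (Q i)
  mul_of_le : ∀ {i j}, i ≤ j → Q i * Q j = Q i
  zero : Q 0 = 0
  last : Q (Fin.last r) = 1

def nestGap [Ring A] (Q : Fin (r + 1) → A) (k : Fin r) : A :=
  Q k.succ - Q k.castSucc

def nestDiag [Ring A] (Q : Fin (r + 1) → A) (x : A) : A :=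
  ∑ k, nestGap Q k * x * nestGap Q k

namespace IsProjNest

variable [Ring A] [StarRing A] {Q : Fin (r + 1) → A}

theorem mul_of_ge (hQ : IsProjNest Q) {i j : Fin (r + 1)} (h : j ≤ i) : Q i * Q j = Q j := by
  simpa [(hQ.isStarProjection _).isSelfAdjoint.star_eq] using congr(star $(hQ.mul_of_le h))

theorem sum_nestGap (hQ : IsProjNest Q) : ∑ k, nestGap Q k = 1 := by
  simp only [nestGap, Fin.sum_univ_succ_sub_castSucc Q, hQ.last, hQ.zero, sub_zero]

theorem isStarProjection_nestGap (hQ : IsProjNest Q) (k : Fin r) :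
    IsStarProjection (nestGap Q k) :=
  (hQ.isStarProjection _).sub_of_mul_eq_left (hQ.isStarProjection _)
    (hQ.mul_of_le (Fin.castSucc_le_succ k))

theorem mul_nestGap_of_succ_le (hQ : IsProjNest Q) {i : Fin (r + 1)} {k : Fin r}
    (h : k.succ ≤ i) : Q i * nestGap Q k = nestGap Q k := by
  rw [nestGap, mul_sub, hQ.mul_of_ge h, hQ.mul_of_ge (k.castSucc_le_succ.trans h)]

theorem nestGap_mul_of_le_castSucc (hQ : IsProjNest Q) {i : Fin (r + 1)} {k : Fin r}
    (h : i ≤ k.castSucc) : nestGap Q k * Q i = 0 := by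
  rw [nestGap, sub_mul, hQ.mul_of_ge h, hQ.mul_of_ge (h.trans k.castSucc_le_succ), sub_self]

theorem mul_nestGap_of_le_castSucc (hQ : IsProjNest Q) {i : Fin (r + 1)} {k : Fin r}
    (h : i ≤ k.castSucc) : Q i * nestGap Q k = 0 := by
  rw [nestGap, mul_sub, hQ.mul_of_le h, hQ.mul_of_le (h.trans k.castSucc_le_succ), sub_self]

theorem one_sub_mul_nestDiag_mul (hQ : IsProjNest Q) (x : A) (i : Fin (r + 1)) :
    (1 - Q i) * nestDiag Q x * Q i = 0 := by
  simp only [nestDiag, Finset.mul_sum, Finset.sum_mul]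
  refine Finset.sum_eq_zero fun k _ => ?_
  rcases le_or_gt k.succ i with h | h
  · rw [← mul_assoc, ← mul_assoc, sub_mul, one_mul, hQ.mul_nestGap_of_succ_le h, sub_self,
      zero_mul, zero_mul, zero_mul]
  · rw [mul_assoc, mul_assoc, hQ.nestGap_mul_of_le_castSucc (Fin.le_castSucc_iff.mpr h),
      mul_zero, mul_zero]

theorem star_nestDiag (hQ : IsProjNest Q) (x : A) : star (nestDiag Q x) = nestDiag Q (star x) := by
  simp only [nestDiag, star_sum, star_mul, (hQ.isStarProjection_nestGap _).isSelfAdjoint.star_eq,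
    mul_assoc]

theorem sub_nestDiag (hQ : IsProjNest Q) (x : A) :
    x - nestDiag Q x = ∑ k, ((1 - Q k.succ) * x * Q k.succ * nestGap Q k +
      Q k.castSucc * x * (1 - Q k.castSucc) * nestGap Q k) := by
  have hx : x = ∑ k, x * nestGap Q k := by rw [← Finset.mul_sum, hQ.sum_nestGap, mul_one]
  rw [nestDiag]
  nth_rw 1 [hx]
  rw [← Finset.sum_sub_distrib]
  refine Finset.sum_congr rfl fun k _ => ?_
  rw [mul_assoc _ (Q k.succ), hQ.mul_nestGap_of_succ_le le_rfl, mul_assoc _ (1 - Q k.castSucc),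
    sub_mul 1 (Q k.castSucc), one_mul, hQ.mul_nestGap_of_le_castSucc le_rfl, sub_zero]
  simp only [nestGap]
  noncomm_ring

end IsProjNest

section CStarRing

variable [NormedRing A] [StarRing A] [CStarRing A]

theorem IsStarProjection.norm_mul_right_le {p : A} (hp : IsStarProjection p) (y : A) :
    ‖y * p‖ ≤ ‖y‖ :=
  (norm_mul_le _ _).trans (mul_le_of_le_one_right (norm_nonneg _) (IsStarProjection.norm_le p hp))

theorem IsStarProjection.norm_mul_left_le {p : A} (hp : IsStarProjection p) (y : A) :
    ‖p * y‖ ≤ ‖y‖ :=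
  (norm_mul_le _ _).trans (mul_le_of_le_one_left (norm_nonneg _) (IsStarProjection.norm_le p hp))

theorem IsStarProjection.norm_one_sub_mul_mul_le_norm_sub {q c : A} (hq : IsStarProjection q)
    (hc : (1 - q) * c * q = 0) (x : A) : ‖(1 - q) * x * q‖ ≤ ‖x - c‖ := by
  have h : (1 - q) * x * q = (1 - q) * (x - c) * q := by
    rw [mul_sub (1 - q) x c, sub_mul ((1 - q) * x), hc, sub_zero]
  rw [h]
  exact (hq.norm_mul_right_le _).trans (hq.one_sub.norm_mul_left_le _)

theorem IsProjNest.norm_sub_nestDiag_le {Q : Fin (r + 1) → A} (hQ : IsProjNest Q) (x : A) :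
    ‖x - nestDiag Q x‖ ≤ ∑ k : Fin r, (‖(1 - Q k.succ) * x * Q k.succ‖ +
      ‖(1 - Q k.castSucc) * star x * Q k.castSucc‖) := by
  rw [hQ.sub_nestDiag]
  refine (norm_sum_le _ _).trans (Finset.sum_le_sum fun k _ => (norm_add_le _ _).trans ?_)
  have hstar : Q k.castSucc * x * (1 - Q k.castSucc) =
      star ((1 - Q k.castSucc) * star x * Q k.castSucc) := by
    simp only [star_mul, star_star, star_sub, star_one,
      (hQ.isStarProjection _).isSelfAdjoint.star_eq, mul_assoc]
  rw [hstar, ← norm_star ((1 - Q k.castSucc) * star x * Q k.castSucc)]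
  exact add_le_add ((hQ.isStarProjection_nestGap k).norm_mul_right_le _)
    ((hQ.isStarProjection_nestGap k).norm_mul_right_le _)

end CStarRing

end Nest

theorem IsProjChain.isProjNest {n r : ℕ} {P : Fin (r + 1) → Matrix (Fin n) (Fin n) ℂ}
    (hP : IsProjChain P) : IsProjNest P where
  isStarProjection i := isStarProjection_iff'.mpr ⟨(hP.1 i).1, (hP.1 i).2⟩
  mul_of_le := hP.2.2.2.1 _ _
  zero := hP.2.1
  last := hP.2.2.1

theorem stmt_8_general (r : ℕ) (η : ℝ) (hη : 0 < η) :
    ∃ ε : ℝ, 0 < ε ∧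
      ∀ (n : ℕ) (P Q : Fin (r + 1) → Matrix (Fin n) (Fin n) ℂ),
        IsProjChain P → IsProjChain Q →
        (∀ a ∈ nestAlgebra P, ‖a‖ ≤ 1 → ∃ b ∈ nestAlgebra Q, ‖a - b‖ < ε) →
        ∀ a, a ∈ nestAlgebra P → aᴴ ∈ nestAlgebra P → ‖a‖ ≤ 1 →
          ∃ b, b ∈ nestAlgebra Q ∧ bᴴ ∈ nestAlgebra Q ∧ ‖a - b‖ < η := by
  set ε := η / (2 * r + 1)
  refine ⟨ε, by positivity, fun n P Q _ hQ hsub a haP haP' ha => ?_⟩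
  replace hQ := hQ.isProjNest
  have hcompression : ∀ x ∈ nestAlgebra P, ‖x‖ ≤ 1 → ∀ i, ‖(1 - Q i) * x * Q i‖ ≤ ε := by
    intro x hx hx1 i
    obtain ⟨c, hc, hxc⟩ := hsub x hx hx1
    exact ((hQ.isStarProjection i).norm_one_sub_mul_mul_le_norm_sub (hc i) x).trans hxc.le
  refine ⟨nestDiag Q a, hQ.one_sub_mul_nestDiag_mul a, ?_, ?_⟩
  · rw [← star_eq_conjTranspose, hQ.star_nestDiag]
    exact hQ.one_sub_mul_nestDiag_mul _
  calc ‖a - nestDiag Q a‖ ≤ ∑ _k : Fin r, (ε + ε) :=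
        (hQ.norm_sub_nestDiag_le a).trans <| Finset.sum_le_sum fun k _ =>
          add_le_add (hcompression a haP ha _) (hcompression (star a) haP' (by rwa [norm_star]) _)
    _ = 2 * r * η / (2 * r + 1) := by
      rw [Finset.sum_const, Finset.card_univ, Fintype.card_fin, nsmul_eq_mul]
      ring
    _ < η := by rw [div_lt_iff₀ (by positivity)]; linarith

/-- For every `r ≥ 1` and `η > 0` there exists `ε > 0`,
depending only on `r` and `η`, such that: for every `n` and all chains of
orthogonal projections `0 = P₀ < P₁ < ⋯ < P_r = I` and `0 = Q₀ < Q₁ < ⋯ < Q_r = I`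
in `Mₙ(ℂ)`, with associated nest algebras `A₁` and `A₂`, if `A₁ ⊆_ε A₂` then
`A₁ ∩ A₁* ⊆_η A₂ ∩ A₂*`. -/
theorem stmt_8 (r : ℕ) (hr : 1 ≤ r) (η : ℝ) (hη : 0 < η) :
    ∃ ε : ℝ, 0 < ε ∧
      ∀ (n : ℕ) (P Q : Fin (r + 1) → Matrix (Fin n) (Fin n) ℂ),
        IsProjChain P → IsProjChain Q →
        (∀ a ∈ nestAlgebra P, ‖a‖ ≤ 1 → ∃ b ∈ nestAlgebra Q, ‖a - b‖ < ε) →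
        ∀ a, a ∈ nestAlgebra P → aᴴ ∈ nestAlgebra P → ‖a‖ ≤ 1 →
          ∃ b, b ∈ nestAlgebra Q ∧ bᴴ ∈ nestAlgebra Q ∧ ‖a - b‖ < η :=
  stmt_8_general r η hη
end

section
/- Let (A₁, C₁) and (A₂, C₂) be digraph subalgebras of (M_n(ℂ), D_n), and let 0 < ε < 1/4. If A₁ ⊆_ε A₂, then C₁ ⊆ C₂. -/
open scoped Matrix.Norms.L2Operator
open Matrix

/-- A digraph subalgebra of `(Mₙ(ℂ), Dₙ)`: a matrix unit system
`{v_{kl} : (k,l) ∈ S} ⊆ Mₙ(ℂ)` indexed by a reflexive transitive relation `S`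
on `{1,…,m}`, each `v_{kl}` a `Dₙ`-normalising partial isometry, with the usual
matrix unit relations, whose diagonal units are mutually orthogonal projections
in the diagonal masa `Dₙ`. -/
structure DigraphSubalgebra (n m : ℕ) where
  /-- the underlying reflexive transitive relation (digraph) on `{1,…,m}` -/
  S : Fin m → Fin m → Prop
  refl : ∀ k, S k k
  trans : ∀ k l j, S k l → S l j → S k j
  /-- the matrix units `v_{kl}` (only those with `(k,l) ∈ S` are relevant) -/
  u : Fin m → Fin m → Matrix (Fin n) (Fin n) ℂ
  partial_isometry : ∀ k l, S k l →
    ((u k l)ᴴ * u k l) * ((u k l)ᴴ * u k l) = (u k l)ᴴ * u k l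
  normalises_left : ∀ k l, S k l → ∀ c : Matrix (Fin n) (Fin n) ℂ, c.IsDiag →
    (u k l * c * (u k l)ᴴ).IsDiag
  normalises_right : ∀ k l, S k l → ∀ c : Matrix (Fin n) (Fin n) ℂ, c.IsDiag →
    ((u k l)ᴴ * c * u k l).IsDiag
  star_eq : ∀ k l, S k l → S l k → (u k l)ᴴ = u l k
  conj_left : ∀ k l, S k l → (u k l)ᴴ * u k l = u l l
  conj_right : ∀ k l, S k l → u k l * (u k l)ᴴ = u k k
  mul_eq : ∀ k l l'', S k l → S l l'' → u k l * u l l'' = u k l''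
  mul_eq_zero : ∀ k l l' l'', S k l → S l' l'' → l ≠ l' → u k l * u l' l'' = 0
  diag_isDiag : ∀ k, (u k k).IsDiag
  diag_proj : ∀ k, u k k * u k k = u k k ∧ (u k k)ᴴ = u k k
  diag_ortho : ∀ k l, k ≠ l → u k k * u l l = 0

namespace DigraphSubalgebra

variable {n m : ℕ}

/-- The digraph algebra `A' = span{v_{kl} : (k,l) ∈ S}`. -/
def A (D : DigraphSubalgebra n m) : Set (Matrix (Fin n) (Fin n) ℂ) :=
  (Submodule.span ℂ {x | ∃ k l, D.S k l ∧ x = D.u k l} : Submodule ℂ _)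

/-- The masa `C' = span{v_{11},…,v_{mm}} ⊆ Dₙ`. -/
def C (D : DigraphSubalgebra n m) : Set (Matrix (Fin n) (Fin n) ℂ) :=
  (Submodule.span ℂ (Set.range fun k => D.u k k) : Submodule ℂ _)

/-- The normaliser `N_{C'}(A')`: partial isometries `w ∈ A'` with
`w c w* ∈ C'` and `w* c w ∈ C'` for all `c ∈ C'`. -/
def N (D : DigraphSubalgebra n m) : Set (Matrix (Fin n) (Fin n) ℂ) :=
  {w | w ∈ D.A ∧ (wᴴ * w) * (wᴴ * w) = wᴴ * w ∧
    ∀ c ∈ D.C, w * c * wᴴ ∈ D.C ∧ wᴴ * c * w ∈ D.C}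

end DigraphSubalgebra

/-!
A diagonal projection `p = v_{kk}` of the first algebra has norm at most one, so some `b ∈ A₂`
is `ε`-close to it, and then every diagonal entry of `b` is within `ε < 1/2` of the
corresponding `0`/`1` entry of `p`. Off-diagonal matrix units of `A₂` have zero diagonal, so the
diagonal part of `b` lies in `C₂ = span{w_{ll}}`. As the `w_{ll}` are orthogonal diagonal
projections, a diagonal matrix of `C₂` is constant on the support of each `w_{ll}` and vanishes
off their union; rounding its entries to `0` or `1` preserves this, and recovers `p`.
-/

theorem Matrix.norm_apply_le_l2_opNorm {𝕜 m n : Type*} [RCLike 𝕜] [Fintype m] [Fintype n]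
    [DecidableEq n] (A : Matrix m n 𝕜) (i : m) (j : n) : ‖A i j‖ ≤ ‖A‖ := by
  have h := A.l2_opNorm_mulVec (EuclideanSpace.single j 1)
  rw [PiLp.norm_single, norm_one, mul_one] at h
  refine le_trans (le_of_eq ?_) ((PiLp.norm_apply_le _ i).trans h)
  simp

theorem Matrix.IsDiag.mul_apply_self_left {α n : Type*} [NonUnitalNonAssocSemiring α] [Fintype n]
    [DecidableEq n] {d : Matrix n n α} (hd : d.IsDiag) (M : Matrix n n α) (i : n) :
    (d * M) i i = d i i * M i i := by
  rw [← hd.diagonal_diag, diagonal_mul, diagonal_apply_eq]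

theorem Matrix.IsDiag.mul_apply_self_right {α n : Type*} [NonUnitalNonAssocSemiring α] [Fintype n]
    [DecidableEq n] {d : Matrix n n α} (hd : d.IsDiag) (M : Matrix n n α) (i : n) :
    (M * d) i i = M i i * d i i := by
  rw [← hd.diagonal_diag, mul_diagonal, diagonal_apply_eq]

theorem apply_sum_mul_eq_sum_apply_mul {ι R : Type*} [Fintype ι] [NonAssocSemiring R]
    {w : ι → R} (hw : ∀ l, w l = 0 ∨ w l = 1) (hw' : Pairwise fun l l' => w l * w l' = 0)
    {f : R → R} (hf : f 0 = 0) (c : ι → R) :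
    f (∑ l, c l * w l) = ∑ l, f (c l) * w l := by
  by_cases h : ∃ l₀, w l₀ = 1
  · obtain ⟨l₀, hl₀⟩ := h
    have hw0 : ∀ l ≠ l₀, w l = 0 := fun l hl => by simpa [hl₀] using hw' hl
    rw [Fintype.sum_eq_single l₀ fun l hl => by rw [hw0 l hl, mul_zero],
      Fintype.sum_eq_single l₀ fun l hl => by rw [hw0 l hl, mul_zero], hl₀, mul_one, mul_one]
  · push Not at h
    have hw0 : ∀ l, w l = 0 := fun l => (hw l).resolve_right (h l)
    simp [hw0, hf]

noncomputable def roundZeroOne {R : Type*} [Norm R] [Sub R] [Zero R] [One R] (z : R) : R :=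
  if ‖z - 1‖ < 1 / 2 then 1 else 0

theorem roundZeroOne_eq {R : Type*} [NormedRing R] [NormOneClass R] {z w : R}
    (hz : z = 0 ∨ z = 1) (h : ‖z - w‖ < 1 / 2) : roundZeroOne w = z := by
  rcases hz with rfl | rfl
  · have h1 := norm_sub_norm_le (1 : R) w
    rw [norm_one, norm_sub_rev] at h1
    rw [zero_sub, norm_neg] at h
    rw [roundZeroOne, if_neg (by linarith)]
  · rw [roundZeroOne, if_pos (by rwa [norm_sub_rev])]

namespace DigraphSubalgebra

variable {n m : ℕ} (D : DigraphSubalgebra n m)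

theorem u_mem_A {k l : Fin m} (hkl : D.S k l) : D.u k l ∈ D.A :=
  Submodule.subset_span ⟨k, l, hkl, rfl⟩

theorem u_self_mem_C (k : Fin m) : D.u k k ∈ D.C :=
  Submodule.subset_span ⟨k, rfl⟩

theorem norm_u_self_le_one (k : Fin m) : ‖D.u k k‖ ≤ 1 :=
  IsStarProjection.norm_le _ ⟨(D.diag_proj k).1, (D.diag_proj k).2⟩

theorem u_self_apply_eq_zero_or_one (k : Fin m) (i : Fin n) :
    D.u k k i i = 0 ∨ D.u k k i i = 1 := by
  rw [← IsIdempotentElem.iff_eq_zero_or_one, IsIdempotentElem,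
    ← (D.diag_isDiag k).mul_apply_self_left, (D.diag_proj k).1]

theorem u_self_apply_mul_u_self_apply {k l : Fin m} (hkl : k ≠ l) (i : Fin n) :
    D.u k k i i * D.u l l i i = 0 := by
  rw [← (D.diag_isDiag k).mul_apply_self_left, D.diag_ortho k l hkl, Matrix.zero_apply]

theorem u_apply_self_eq_zero {k l : Fin m} (hkl : D.S k l) (hne : k ≠ l) (i : Fin n) :
    D.u k l i i = 0 := by
  have h : D.u k l = D.u k k * D.u k l * D.u l l := by
    rw [D.mul_eq k k l (D.refl k) hkl, D.mul_eq k l l hkl (D.refl l)]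
  rw [h, (D.diag_isDiag l).mul_apply_self_right, (D.diag_isDiag k).mul_apply_self_left,
    mul_comm (D.u k k i i), mul_assoc, D.u_self_apply_mul_u_self_apply hne, mul_zero]

theorem diagonal_diag_mem_C {a : Matrix (Fin n) (Fin n) ℂ} (ha : a ∈ D.A) :
    diagonal a.diag ∈ D.C := by
  simp only [A, C, SetLike.mem_coe] at ha ⊢
  induction ha using Submodule.span_induction with
  | mem x hx =>
    obtain ⟨k, l, hkl, rfl⟩ := hx
    by_cases hne : k = l
    · subst hne
      rw [(D.diag_isDiag k).diagonal_diag]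
      exact D.u_self_mem_C k
    · rw [show (D.u k l).diag = 0 from funext (D.u_apply_self_eq_zero hkl hne)]
      simp
  | zero => simp
  | add x y _ _ hx hy =>
    convert add_mem hx hy using 1
    rw [diagonal_add, diag_add]
    rfl
  | smul c x _ hx => simpa [diagonal_smul] using Submodule.smul_mem _ c hx

theorem mem_C_of_forall_norm_apply_self_sub_lt {p c : Matrix (Fin n) (Fin n) ℂ} (hp : p.IsDiag)
    (hp01 : ∀ i, p i i = 0 ∨ p i i = 1) (hc : c ∈ D.C) (hpc : ∀ i, ‖p i i - c i i‖ < 1 / 2) :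
    p ∈ D.C := by
  obtain ⟨coef, rfl⟩ := (Submodule.mem_span_range_iff_exists_fun ℂ).1 hc
  suffices p = ∑ l, roundZeroOne (coef l) • D.u l l by
    rw [this]
    exact Submodule.sum_mem _ fun l _ => Submodule.smul_mem _ _ (D.u_self_mem_C l)
  ext i j
  rcases eq_or_ne i j with rfl | hij
  · have hround := apply_sum_mul_eq_sum_apply_mul (fun l => D.u_self_apply_eq_zero_or_one l i)
      (fun l l' h => D.u_self_apply_mul_u_self_apply h i)
      (roundZeroOne_eq (Or.inl rfl) (by norm_num)) coef
    simp only [Matrix.sum_apply, Matrix.smul_apply, smul_eq_mul] at hpc ⊢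
    rw [← hround, roundZeroOne_eq (hp01 i) (hpc i)]
  · simp [hp hij, Matrix.sum_apply, D.diag_isDiag _ hij]

end DigraphSubalgebra

theorem stmt_12_general (n m₁ m₂ : ℕ)
    (D₁ : DigraphSubalgebra n m₁) (D₂ : DigraphSubalgebra n m₂)
    (ε : ℝ) (hε : ε < 1 / 4)
    (h : ∀ a ∈ D₁.A, ‖a‖ ≤ 1 → ∃ b ∈ D₂.A, ‖a - b‖ < ε) :
    D₁.C ⊆ D₂.C := by
  suffices ∀ k, D₁.u k k ∈ D₂.C from Submodule.span_le.2 (Set.range_subset_iff.2 this)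
  intro k
  obtain ⟨b, hb, hpb⟩ := h _ (D₁.u_mem_A (D₁.refl k)) (D₁.norm_u_self_le_one k)
  refine D₂.mem_C_of_forall_norm_apply_self_sub_lt (D₁.diag_isDiag k)
    (D₁.u_self_apply_eq_zero_or_one k) (D₂.diagonal_diag_mem_C hb) fun i => ?_
  calc ‖D₁.u k k i i - diagonal b.diag i i‖ = ‖(D₁.u k k - b) i i‖ := by simp
    _ ≤ ‖D₁.u k k - b‖ := norm_apply_le_l2_opNorm _ i i
    _ < 1 / 2 := by linarith

/-- Let `(A₁, C₁)` and `(A₂, C₂)` be digraph subalgebras of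
`(Mₙ(ℂ), Dₙ)` and let `0 < ε < 1/4`.  If `A₁ ⊆_ε A₂` then `C₁ ⊆ C₂`. -/
theorem stmt_12 (n m₁ m₂ : ℕ) (hm₁ : 1 ≤ m₁) (hm₂ : 1 ≤ m₂)
    (D₁ : DigraphSubalgebra n m₁) (D₂ : DigraphSubalgebra n m₂)
    (ε : ℝ) (hε0 : 0 < ε) (hε : ε < 1 / 4)
    (h : ∀ a ∈ D₁.A, ‖a‖ ≤ 1 → ∃ b ∈ D₂.A, ‖a - b‖ < ε) :
    D₁.C ⊆ D₂.C :=
  stmt_12_general n m₁ m₂ D₁ D₂ ε hε h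
end

section
/- Let w ∈ M_n(ℂ) with ‖w‖ ≤ 1 and ‖w*w − (w*w)²‖ ≤ ε. Then ‖w w* w − w‖ ≤ √(2ε). -/
/-!
With `x = w w* w - w` and `a = w* w` one has the identity `x* x = (a - a²) - a (a - a²)`,
so the C*-identity gives `‖x‖² = ‖x* x‖ ≤ ε + ‖a‖ ε ≤ 2ε`.
-/

open scoped Matrix.Norms.L2Operator
open Matrix

lemma star_mul_self_eq_of_mul_star_mul_sub {R : Type*} [NonUnitalRing R] [StarRing R] (w : R) :
    star (w * star w * w - w) * (w * star w * w - w) =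
      (star w * w - star w * w * (star w * w)) -
        star w * w * (star w * w - star w * w * (star w * w)) := by
  simp only [star_sub, star_mul, star_star]
  noncomm_ring

namespace CStarRing

variable {A : Type*} [NonUnitalNormedRing A] [StarRing A] [CStarRing A]

lemma norm_le_sqrt_of_norm_star_mul_self_le {x : A} {c : ℝ} (h : ‖star x * x‖ ≤ c) :
    ‖x‖ ≤ √c := by
  rw [norm_star_mul_self] at h
  exact Real.le_sqrt_of_sq_le (by simpa [sq] using h)

theorem norm_mul_star_mul_sub_le_sqrt {w : A} {ε : ℝ} (hw : ‖w‖ ≤ 1)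
    (h : ‖star w * w - star w * w * (star w * w)‖ ≤ ε) :
    ‖w * star w * w - w‖ ≤ √(2 * ε) := by
  set a := star w * w
  have ha : ‖a‖ ≤ 1 := by
    rw [norm_star_mul_self]
    nlinarith [norm_nonneg w]
  refine norm_le_sqrt_of_norm_star_mul_self_le ?_
  calc ‖star (w * star w * w - w) * (w * star w * w - w)‖
      = ‖(a - a * a) - a * (a - a * a)‖ := by rw [star_mul_self_eq_of_mul_star_mul_sub]
    _ ≤ ‖a - a * a‖ + ‖a‖ * ‖a - a * a‖ :=
        (norm_sub_le _ _).trans (by gcongr; exact norm_mul_le _ _)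
    _ ≤ ε + 1 * ε := by gcongr
    _ = 2 * ε := by ring

end CStarRing

/-- If `w ∈ Mₙ(ℂ)` has `‖w‖ ≤ 1` and `‖w*w − (w*w)²‖ ≤ ε`,
then `‖w w* w − w‖ ≤ √(2ε)`. -/
theorem stmt_16 (n : ℕ) (ε : ℝ) (w : Matrix (Fin n) (Fin n) ℂ)
    (hw : ‖w‖ ≤ 1) (h : ‖wᴴ * w - (wᴴ * w) * (wᴴ * w)‖ ≤ ε) :
    ‖w * wᴴ * w - w‖ ≤ Real.sqrt (2 * ε) :=
  CStarRing.norm_mul_star_mul_sub_le_sqrt hw h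
end
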